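/- For every μ ∈ 𝐌, the Hoover coefficient equals the maximal vertical distance between the diagonal and the Lorenz curve: H(μ) = sup_{p ∈ [0,1]} (p − L_μ(p)), and this supremum is attained (in particular it is attained at p = F_μ(m_μ)). -/

import Mathlib

open MeasureTheory Filter Topology

noncomputable section

/-- The mean of a measure on `ℝ`. -/
def mMean (μ : Measure ℝ) : ℝ := ∫ x, x ∂μ

/-- `μ ∈ 𝐌`: a Borel probability measure on `ℝ₊` (modelled as a measure on `ℝ` giving no
mass to negative numbers) with finite nonzero mean. -/
def MemM (μ : Measure ℝ) : Prop :=
  IsProbabilityMeasure μ ∧ μ {x | x < 0} = 0 ∧ Integrable id μ ∧ 0 < mMean μ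

/-- The cumulative distribution function `F_μ(x) = μ([0,x])`. -/
def cdfR (μ : Measure ℝ) (x : ℝ) : ℝ := (μ (Set.Icc 0 x)).toReal

/-- The quantile function `Q_μ(p) = inf {x ∈ ℝ₊ : F_μ(x) ≥ p}`. -/
def quant (μ : Measure ℝ) (p : ℝ) : ℝ := sInf {x : ℝ | 0 ≤ x ∧ p ≤ cdfR μ x}

/-- The Lorenz function `L_μ(p) = (∫_0^p Q_μ(t) dt) / m_μ`. -/
def lorenz (μ : Measure ℝ) (p : ℝ) : ℝ := (∫ t in (0:ℝ)..p, quant μ t) / mMean μ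

/-- The pseudo-Lorenz function `Λ_μ(p) = (∫_{[0,Q_μ(p)]} u dμ(u)) / m_μ` for `p ∈ [0,1)`,
with `Λ_μ(1) = 1`. -/
def pseudoLorenz (μ : Measure ℝ) (p : ℝ) : ℝ :=
  if p = 1 then 1 else (∫ u in Set.Icc (0:ℝ) (quant μ p), u ∂μ) / mMean μ

/-- The Gini coefficient `G(μ) = (∫∫ |x-y| d(μ⊗μ)) / (2 m_μ)`. -/
def gini (μ : Measure ℝ) : ℝ := (∫ z : ℝ × ℝ, |z.1 - z.2| ∂(μ.prod μ)) / (2 * mMean μ)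

/-- The Hoover coefficient `H(μ) = (∫ |x - m_μ| dμ) / (2 m_μ)`. -/
def hoover (μ : Measure ℝ) : ℝ := (∫ x, |x - mMean μ| ∂μ) / (2 * mMean μ)

/-- The Wasserstein-1 distance `W₁(μ,ν) = ∫_0^1 |Q_μ - Q_ν|`. -/
def W1 (μ ν : Measure ℝ) : ℝ := ∫ t in (0:ℝ)..1, |quant μ t - quant ν t|

/-- Weak convergence of a sequence of measures: convergence of integrals of all bounded
continuous functions. -/
def WeakCv (μs : ℕ → Measure ℝ) (ν : Measure ℝ) : Prop :=
  ∀ f : ℝ → ℝ, Continuous f → (∃ C : ℝ, ∀ x, |f x| ≤ C) →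
    Tendsto (fun n => ∫ x, f x ∂(μs n)) atTop (𝓝 (∫ x, f x ∂ν))

/-- Uniform integrability of a family of measures on `ℝ₊`:
`sup_i ∫_{(α,∞)} x dμ_i(x) → 0` as `α → +∞`. -/
def UnifInt {ι : Type*} (μs : ι → Measure ℝ) : Prop :=
  ∀ ε > (0:ℝ), ∃ A : ℝ, ∀ α ≥ A, ∀ i, (∫ x in Set.Ioi α, x ∂(μs i)) ≤ ε

end

section Aux
open MeasureTheory Filter Topology Set ENNReal

/-! With `F` the distribution function and `m` the mean, the layer-cake formula gives
`m L(p) = ∫₀ᵖ Q = ∫_{x>0} (p - F x)⁺ dx`, and Fubini gives `m H(μ) = ∫ (m - x)⁺ dμ = ∫₀ᵐ F`.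
Hence `m (p - L(p)) = p m - ∫_{x>0} (p - F x)⁺ ≤ p m - ∫₀ᵐ (p - F x) dx = m H(μ)`, with equality
when `(p - F)⁺` equals `p - F` on `(0, m]` and vanishes beyond `m`, i.e. for `p = F(m)`. -/

open Set ProbabilityTheory

section MonotoneFunction

variable {F : ℝ → ℝ} {m : ℝ}

lemma ofReal_mul_le_lintegral_sub_add_lintegral (hF : Measurable F) (p : ℝ) (hm : 0 ≤ m) :
    ENNReal.ofReal (p * m) ≤
      (∫⁻ x in Ioi 0, ENNReal.ofReal (p - F x)) + ∫⁻ x in Ioc 0 m, ENNReal.ofReal (F x) := by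
  calc ENNReal.ofReal (p * m) = ∫⁻ _ in Ioc 0 m, ENNReal.ofReal p := by
        rw [setLIntegral_const, Real.volume_Ioc, sub_zero, ENNReal.ofReal_mul' hm]
    _ ≤ ∫⁻ x in Ioc 0 m, (ENNReal.ofReal (p - F x) + ENNReal.ofReal (F x)) :=
        lintegral_mono fun x => by simpa using ENNReal.ofReal_add_le (p := p - F x) (q := F x)
    _ = (∫⁻ x in Ioc 0 m, ENNReal.ofReal (p - F x)) + ∫⁻ x in Ioc 0 m, ENNReal.ofReal (F x) :=
        lintegral_add_right _ hF.ennreal_ofReal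
    _ ≤ _ := by gcongr; exact Ioc_subset_Ioi_self

lemma ofReal_mul_eq_lintegral_sub_add_lintegral (hF : Monotone F) (hF0 : ∀ x, 0 ≤ F x)
    (hm : 0 ≤ m) :
    ENNReal.ofReal (F m * m) =
      (∫⁻ x in Ioi 0, ENNReal.ofReal (F m - F x)) + ∫⁻ x in Ioc 0 m, ENNReal.ofReal (F x) := by
  have htail : ∫⁻ x in Ioi m, ENNReal.ofReal (F m - F x) = 0 :=
    setLIntegral_eq_zero measurableSet_Ioi fun x hx => by simp [hF (le_of_lt hx)]
  rw [← Ioc_union_Ioi_eq_Ioi hm, lintegral_union measurableSet_Ioi (Ioc_disjoint_Ioi le_rfl),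
    htail, add_zero, ← lintegral_add_right _ hF.measurable.ennreal_ofReal,
    setLIntegral_congr_fun measurableSet_Ioc fun x hx =>
      (ENNReal.ofReal_add (sub_nonneg.2 (hF hx.2)) (hF0 x)).symm]
  simp only [sub_add_cancel]
  rw [setLIntegral_const, Real.volume_Ioc, sub_zero, ENNReal.ofReal_mul' hm]

end MonotoneFunction

lemma lintegral_Iic_measure_Iic (ν : Measure ℝ) [SFinite ν] (m : ℝ) :
    ∫⁻ x in Iic m, ν (Iic x) = ∫⁻ u, ENNReal.ofReal (m - u) ∂ν := by
  have hs : MeasurableSet {z : ℝ × ℝ | z.2 ≤ z.1} :=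
    measurableSet_le measurable_snd measurable_fst
  calc ∫⁻ x in Iic m, ν (Iic x) = ((volume.restrict (Iic m)).prod ν) {z | z.2 ≤ z.1} :=
        (Measure.prod_apply hs).symm
    _ = ∫⁻ u, volume.restrict (Iic m) {x | u ≤ x} ∂ν := Measure.prod_apply_symm hs
    _ = _ := by
        refine lintegral_congr fun u => ?_
        rw [Measure.restrict_apply' measurableSet_Iic, ← Real.volume_Icc]
        rfl

lemma exists_nonneg_le_cdf (μ : Measure ℝ) {t : ℝ} (ht : t < 1) :
    ∃ x, 0 ≤ x ∧ t ≤ cdf μ x :=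
  (((tendsto_cdf_atTop μ).eventually (eventually_ge_nhds ht)).and (eventually_ge_atTop 0)).exists
    |>.imp fun _ h => ⟨h.2, h.1⟩

lemma quant_nonneg (μ : Measure ℝ) (t : ℝ) : 0 ≤ quant μ t :=
  Real.sInf_nonneg fun _ hx => hx.1

lemma lintegral_Ioc_cdf_ne_top (μ : Measure ℝ) (m : ℝ) :
    ∫⁻ x in Ioc 0 m, ENNReal.ofReal (cdf μ x) ≠ ⊤ := by
  refine ne_top_of_le_ne_top (b := ∫⁻ _ in Ioc 0 m, 1) (by simp) (lintegral_mono fun x => ?_)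
  simpa using cdf_le_one μ x

section Quantile

variable {μ : Measure ℝ} [IsProbabilityMeasure μ]

lemma cdfR_eq_cdf (hneg : μ (Iio 0) = 0) : cdfR μ = cdf μ := by
  funext x
  rw [cdfR, cdf_eq_real, measureReal_def]
  congr 1
  refine le_antisymm (measure_mono Icc_subset_Iic_self) ?_
  calc μ (Iic x) ≤ μ (Iio 0 ∪ Icc 0 x) :=
        measure_mono fun y hy => (lt_or_ge y 0).imp id fun h => ⟨h, hy⟩
    _ ≤ μ (Icc 0 x) := by simpa [hneg] using measure_union_le (μ := μ) (Iio 0) (Icc 0 x)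

lemma quant_le_iff (hneg : μ (Iio 0) = 0) {t x : ℝ} (hx : 0 ≤ x) (ht : t < 1) :
    quant μ t ≤ x ↔ t ≤ cdf μ x := by
  have hne : {x | 0 ≤ x ∧ t ≤ cdf μ x}.Nonempty := exists_nonneg_le_cdf μ ht
  rw [quant, cdfR_eq_cdf hneg]
  refine ⟨fun h => ?_, fun h => csInf_le ⟨0, fun _ hy => hy.1⟩ ⟨hx, h⟩⟩
  have hright : Tendsto (cdf μ) (𝓝[>] x) (𝓝 (cdf μ x)) :=
    ((cdf μ).right_continuous x).tendsto.mono_left (nhdsWithin_mono _ Ioi_subset_Ici_self)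
  refine ge_of_tendsto hright (eventually_nhdsWithin_of_forall fun y hy => ?_)
  obtain ⟨s, hs, hsy⟩ := exists_lt_of_csInf_lt hne (h.trans_lt hy)
  exact hs.2.trans (monotone_cdf μ hsy.le)

lemma monotoneOn_quant (hneg : μ (Iio 0) = 0) : MonotoneOn (quant μ) (Iio 1) :=
  fun _ ht _ ht' htt' => (quant_le_iff hneg (quant_nonneg μ _) ht).2
    (htt'.trans ((quant_le_iff hneg (quant_nonneg μ _) ht').1 le_rfl))

lemma aemeasurable_quant (hneg : μ (Iio 0) = 0) {p : ℝ} (hp : p ≤ 1) :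
    AEMeasurable (quant μ) (volume.restrict (Ioo 0 p)) :=
  aemeasurable_restrict_of_monotoneOn measurableSet_Ioo
    ((monotoneOn_quant hneg).mono fun _ ht => ht.2.trans_le hp)

-- On `Ioo 0 p` we have `t < 1`, so `quant μ t` is a genuine infimum; at `t = 1` the defining set
-- may be empty, and then `quant μ 1 = sInf ∅ = 0`.
lemma lintegral_quant_eq (hneg : μ (Iio 0) = 0) {p : ℝ} (hp : p ≤ 1) :
    ∫⁻ t in Ioo 0 p, ENNReal.ofReal (quant μ t) =
      ∫⁻ x in Ioi 0, ENNReal.ofReal (p - cdf μ x) := by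
  rw [lintegral_eq_lintegral_meas_lt _ (ae_of_all _ (quant_nonneg μ))
    (aemeasurable_quant hneg hp)]
  refine setLIntegral_congr_fun measurableSet_Ioi fun x hx => ?_
  have hset : {t | x < quant μ t} ∩ Ioo 0 p = Ioo (cdf μ x) p := by
    ext t
    simp only [mem_inter_iff, mem_Ioo]
    constructor
    · rintro ⟨hxt, -, htp⟩
      exact ⟨lt_of_not_ge fun h => hxt.not_ge ((quant_le_iff hneg hx.le (htp.trans_le hp)).2 h),
        htp⟩
    · rintro ⟨hxt, htp⟩
      exact ⟨lt_of_not_ge fun h => hxt.not_ge ((quant_le_iff hneg hx.le (htp.trans_le hp)).1 h),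
        (cdf_nonneg μ x).trans_lt hxt, htp⟩
  rw [Measure.restrict_apply' measurableSet_Ioo, hset, Real.volume_Ioo]

lemma lorenz_eq_toReal (hneg : μ (Iio 0) = 0) {p : ℝ} (hp0 : 0 ≤ p) (hp1 : p ≤ 1) :
    lorenz μ p = (∫⁻ x in Ioi 0, ENNReal.ofReal (p - cdf μ x)).toReal / mMean μ := by
  rw [lorenz, intervalIntegral.integral_of_le hp0, integral_Ioc_eq_integral_Ioo,
    integral_eq_lintegral_of_nonneg_ae (ae_of_all _ (quant_nonneg μ))
      (aemeasurable_quant hneg hp1).aestronglyMeasurable,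
    lintegral_quant_eq hneg hp1]

end Quantile

section MeanDeviation

variable {μ : Measure ℝ} [IsProbabilityMeasure μ]

lemma lintegral_ofReal_sub_cdf_le_mean (hneg : μ (Iio 0) = 0) (hint : Integrable id μ) {p : ℝ}
    (hp : p ≤ 1) : ∫⁻ x in Ioi 0, ENNReal.ofReal (p - cdf μ x) ≤ ENNReal.ofReal (mMean μ) := by
  have hnonneg : 0 ≤ᵐ[μ] id :=
    measure_eq_zero_iff_ae_notMem.1 hneg |>.mono fun _ h => not_lt.1 h
  rw [show mMean μ = ∫ x, id x ∂μ from rfl, ofReal_integral_eq_lintegral_ofReal hint hnonneg,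
    lintegral_eq_lintegral_meas_lt μ hnonneg measurable_id.aemeasurable]
  refine setLIntegral_mono' measurableSet_Ioi fun x _ => ?_
  calc ENNReal.ofReal (p - cdf μ x) ≤ ENNReal.ofReal (1 - cdf μ x) := by gcongr
    _ = μ (Ioi x) := by
        rw [ENNReal.ofReal_sub _ (cdf_nonneg μ x), ofReal_cdf, ENNReal.ofReal_one, ← compl_Iic,
          prob_compl_eq_one_sub measurableSet_Iic]

lemma lintegral_Ioc_cdf (hneg : μ (Iio 0) = 0) {m : ℝ} (hm : 0 ≤ m) :
    ∫⁻ x in Ioc 0 m, ENNReal.ofReal (cdf μ x) = ∫⁻ u, ENNReal.ofReal (m - u) ∂μ := by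
  have hnull : ∫⁻ x in Iic 0, μ (Iic x) = 0 := by
    rw [setLIntegral_congr Iio_ae_eq_Iic.symm]
    exact setLIntegral_eq_zero measurableSet_Iio fun x hx =>
      measure_mono_null (Iic_subset_Iio.2 hx) hneg
  simp_rw [ofReal_cdf]
  rw [← lintegral_Iic_measure_Iic, ← Iic_union_Ioc_eq_Iic hm,
    lintegral_union measurableSet_Ioc (Iic_disjoint_Ioc le_rfl), hnull, zero_add]

lemma integral_abs_sub_mean (hint : Integrable id μ) :
    ∫ x, |x - mMean μ| ∂μ = 2 * (∫⁻ x, ENNReal.ofReal (mMean μ - x) ∂μ).toReal := by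
  set m := mMean μ
  have hint_id : Integrable (fun x => x) μ := hint
  have hint' : Integrable (fun x => m - x) μ := (integrable_const m).sub hint_id
  have habs : ∀ x, |x - m| = 2 * max (m - x) 0 - (m - x) := fun x => by
    rcases le_total x m with h | h
    · rw [abs_of_nonpos (by linarith), max_eq_left (by linarith)]; ring
    · rw [abs_of_nonneg (by linarith), max_eq_right (by linarith)]; ring
  have hcentered : ∫ x, (m - x) ∂μ = 0 := by
    rw [integral_sub (integrable_const m) hint_id, integral_const, probReal_univ, one_smul]
    exact sub_self m
  simp_rw [habs]
  rw [integral_sub (hint'.pos_part.const_mul 2) hint', hcentered, sub_zero, integral_const_mul,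
    integral_eq_lintegral_of_nonneg_ae (f := fun x => max (m - x) 0)
      (ae_of_all _ fun _ => le_max_right _ _) hint'.pos_part.aestronglyMeasurable]
  simp [ENNReal.ofReal_max]

lemma hoover_eq_toReal (hneg : μ (Iio 0) = 0) (hint : Integrable id μ) (hm : 0 ≤ mMean μ) :
    hoover μ = (∫⁻ x in Ioc 0 (mMean μ), ENNReal.ofReal (cdf μ x)).toReal / mMean μ := by
  rw [hoover, integral_abs_sub_mean hint, lintegral_Ioc_cdf hneg hm,
    mul_div_mul_left _ _ two_ne_zero]

lemma sub_lorenz_le_hoover (hneg : μ (Iio 0) = 0) (hint : Integrable id μ) (hm : 0 < mMean μ)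
    {p : ℝ} (hp0 : 0 ≤ p) (hp1 : p ≤ 1) : p - lorenz μ p ≤ hoover μ := by
  have hI := ne_top_of_le_ne_top ENNReal.ofReal_ne_top
    (lintegral_ofReal_sub_cdf_le_mean hneg hint hp1)
  have hkey := ENNReal.toReal_mono (ENNReal.add_ne_top.2 ⟨hI, lintegral_Ioc_cdf_ne_top μ _⟩)
    (ofReal_mul_le_lintegral_sub_add_lintegral (monotone_cdf μ).measurable p hm.le)
  rw [ENNReal.toReal_ofReal (mul_nonneg hp0 hm.le),
    ENNReal.toReal_add hI (lintegral_Ioc_cdf_ne_top μ _)] at hkey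
  rw [lorenz_eq_toReal hneg hp0 hp1, hoover_eq_toReal hneg hint hm.le, sub_le_iff_le_add,
    ← add_div, le_div_iff₀ hm]
  linarith

lemma hoover_eq_cdfR_sub_lorenz (hneg : μ (Iio 0) = 0) (hint : Integrable id μ)
    (hm : 0 < mMean μ) :
    hoover μ = cdfR μ (mMean μ) - lorenz μ (cdfR μ (mMean μ)) := by
  have hI := ne_top_of_le_ne_top ENNReal.ofReal_ne_top
    (lintegral_ofReal_sub_cdf_le_mean hneg hint (cdf_le_one μ (mMean μ)))
  have hkey := congrArg ENNReal.toReal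
    (ofReal_mul_eq_lintegral_sub_add_lintegral (monotone_cdf μ) (cdf_nonneg μ) hm.le)
  rw [ENNReal.toReal_ofReal (mul_nonneg (cdf_nonneg μ _) hm.le),
    ENNReal.toReal_add hI (lintegral_Ioc_cdf_ne_top μ _)] at hkey
  rw [cdfR_eq_cdf hneg, lorenz_eq_toReal hneg (cdf_nonneg μ _) (cdf_le_one μ _),
    hoover_eq_toReal hneg hint hm.le, eq_sub_iff_add_eq, ← add_div, div_eq_iff hm.ne']
  linarith

end MeanDeviation

/-- `H(μ)` is the maximum of `p − L_μ(p)` over `p ∈ [0,1]`, attained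
in particular at `p = F_μ(m_μ)`. -/
theorem hoover_eq_max_diag_sub_lorenz (μ : Measure ℝ) (hμ : MemM μ) :
    IsGreatest {y : ℝ | ∃ p ∈ Set.Icc (0:ℝ) 1, y = p - lorenz μ p} (hoover μ) ∧
    hoover μ = cdfR μ (mMean μ) - lorenz μ (cdfR μ (mMean μ)) := by
  obtain ⟨_, hneg, hint, hm⟩ := hμ
  have hattained := hoover_eq_cdfR_sub_lorenz hneg hint hm
  have hF : cdfR μ (mMean μ) ∈ Icc (0:ℝ) 1 := by
    rw [cdfR_eq_cdf hneg]
    exact ⟨cdf_nonneg μ _, cdf_le_one μ _⟩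
  refine ⟨⟨⟨_, hF, hattained⟩, ?_⟩, hattained⟩
  rintro y ⟨p, hp, rfl⟩
  exact sub_lorenz_le_hoover hneg hint hm hp.1 hp.2
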